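/- arXiv:1310.7313 — 3 statements merged into one kernel-verified Lean document; each statement's English description precedes it below -/
import Mathlib

section
/- There exists a graph G that is not an odd-cycle graph (i.e., G contains an even cycle) together with a skew-adjacency matrix S of G such that p_S(x) = (−i)^n m(G, ix), where n is the number of vertices of G. In particular, the graph formed by two 4-cycles sharing one vertex, with one cycle oriented positively and the other negatively, is such an example. -/
open Polynomial Matrix

variable {V : Type*} [Fintype V] [DecidableEq V]

/-- `S` is a skew-adjacency matrix of the simple graph `G`. -/
def IsSkewAdj (G : SimpleGraph V) (S : Matrix V V ℝ) : Prop :=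
  (∀ i j, S j i = - S i j) ∧
  (∀ i j, G.Adj i j → S i j = 1 ∨ S i j = -1) ∧
  (∀ i j, ¬ G.Adj i j → S i j = 0)

/-- Spectral radius of a complex square matrix. -/
noncomputable def specRad (M : Matrix V V ℂ) : ℝ :=
  sSup {r : ℝ | ∃ z : ℂ, M.charpoly.IsRoot z ∧ r = ‖z‖}

/-- The number of matchings of `G` covering exactly `k` vertices. -/
noncomputable def matchCount (G : SimpleGraph V) (k : ℕ) : ℕ :=
  {M : G.Subgraph | M.IsMatching ∧ M.verts.ncard = k}.ncard

/-- The matching polynomial of `G`, as a polynomial over `ℂ`. -/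
noncomputable def matchingPoly (G : SimpleGraph V) : Polynomial ℂ :=
  ∑ k ∈ Finset.range (Fintype.card V + 1),
    Polynomial.C ((-1 : ℂ) ^ (k / 2) * (matchCount G k : ℂ)) *
      Polynomial.X ^ (Fintype.card V - k)

/-- The maximum skew spectral radius of `G`. -/
noncomputable def maxSkewSpecRad (G : SimpleGraph V) : ℝ :=
  sSup {r : ℝ | ∃ S : Matrix V V ℝ, IsSkewAdj G S ∧ r = specRad (S.map Complex.ofReal)}

/-- `G` contains an even cycle. -/
def HasEvenCycle (G : SimpleGraph V) : Prop :=
  ∃ (v : V) (w : G.Walk v v), w.IsCycle ∧ Even w.length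

/-! The witness orients the graph on `Fin 5` with edges 01, 02, 03, 04, 12, 14, 23, which contains
the 4-cycles 0123 and 0412. For skew-symmetric `S` the coefficient of `x^(n-4)` in `p_S` is the sum
of the squared Pfaffians of the 4×4 principal submatrices, while in `(-i)^n m(G, ix)` it is the sum
of the numbers of perfect matchings of the induced 4-vertex subgraphs. These agree except on the
vertex sets of the two 4-cycles, each carrying two perfect matchings, where the orientation makes
the Pfaffians 2 and 0; since `2² + 0² = 2 + 2`, both sides are `x⁵ + 7x³ + 7x`. The matching counts
come from enumerating vertex-disjoint edge sets, which correspond bijectively to matchings. -/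

open Finset

namespace SimpleGraph.Subgraph

theorem IsMatching.ncard_verts {V : Type*} [Finite V] {G : SimpleGraph V} {M : G.Subgraph}
    (hM : M.IsMatching) : M.verts.ncard = 2 * M.edgeSet.ncard := by
  classical
  have := Fintype.ofFinite V
  have hdeg (v : M.verts) : M.coe.degree v = 1 := by
    rw [coe_degree, degree_eq_one_iff_existsUnique_adj]
    exact hM v.2
  calc M.verts.ncard = ∑ v : M.verts, M.coe.degree v := by
        simp [hdeg, Set.ncard_eq_toFinset_card']
    _ = 2 * #M.coe.edgeFinset := by convert M.coe.sum_degrees_eq_twice_card_edges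
    _ = 2 * M.edgeSet.ncard := by
        rw [← image_coe_edgeSet_coe, Set.ncard_image_of_injective _
          (Sym2.map.injective Subtype.val_injective), ← coe_edgeFinset, Set.ncard_coe_finset]

theorem IsMatching.eq_of_mem_edgeSet {V : Type*} {G : SimpleGraph V} {M : G.Subgraph}
    (hM : M.IsMatching) {e f : Sym2 V} (he : e ∈ M.edgeSet) (hf : f ∈ M.edgeSet) {v : V}
    (hve : v ∈ e) (hvf : v ∈ f) : e = f := by
  obtain ⟨w, rfl⟩ := Sym2.mem_iff_exists.mp hve
  obtain ⟨w', rfl⟩ := Sym2.mem_iff_exists.mp hvf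
  rw [hM.eq_of_adj_left (M.mem_edgeSet.mp he) (M.mem_edgeSet.mp hf)]

def ofEdges {V : Type*} {G : SimpleGraph V} (F : Set (Sym2 V)) (hF : F ⊆ G.edgeSet) :
    G.Subgraph where
  verts := {v | ∃ e ∈ F, v ∈ e}
  Adj v w := s(v, w) ∈ F
  adj_sub h := hF h
  edge_vert h := ⟨_, h, Sym2.mem_mk_left _ _⟩
  symm := ⟨fun v w h => by rwa [Sym2.eq_swap]⟩

theorem edgeSet_ofEdges {V : Type*} {G : SimpleGraph V} (F : Set (Sym2 V))
    (hF : F ⊆ G.edgeSet) : (ofEdges F hF).edgeSet = F := by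
  ext e
  induction e using Sym2.ind
  exact Subgraph.mem_edgeSet

theorem isMatching_ofEdges {V : Type*} {G : SimpleGraph V} {F : Set (Sym2 V)}
    (hF : F ⊆ G.edgeSet) (hdisj : ∀ e ∈ F, ∀ f ∈ F, e ≠ f → ∀ v ∈ e, v ∉ f) :
    (ofEdges F hF).IsMatching := by
  intro v hv
  obtain ⟨e, he, hve⟩ : ∃ e ∈ F, v ∈ e := hv
  obtain ⟨w, rfl⟩ := Sym2.mem_iff_exists.mp hve
  refine ⟨w, he, fun w' (hw' : s(v, w') ∈ F) => ?_⟩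
  by_contra hne
  exact hdisj _ hw' _ he (fun h => hne (Sym2.congr_right.mp h)) v (Sym2.mem_mk_left _ _)
    (Sym2.mem_mk_left _ _)

end SimpleGraph.Subgraph

open SimpleGraph Subgraph

def matchingEdgeSets (G : SimpleGraph V) [DecidableRel G.Adj] (j : ℕ) : Finset (Finset (Sym2 V)) :=
  (G.edgeFinset.powersetCard j).filter fun F => ∀ e ∈ F, ∀ f ∈ F, e ≠ f → ∀ v ∈ e, v ∉ f

theorem matchCount_of_odd {V : Type*} [Finite V] (G : SimpleGraph V) {k : ℕ} (hk : Odd k) :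
    matchCount G k = 0 := by
  rw [matchCount, Set.ncard_eq_zero, Set.eq_empty_iff_forall_notMem]
  rintro M ⟨hM, hcard⟩
  rw [hM.ncard_verts] at hcard
  exact Nat.not_even_iff_odd.mpr hk (hcard ▸ even_two_mul _)

theorem matchCount_two_mul (G : SimpleGraph V) [DecidableRel G.Adj] (j : ℕ) :
    matchCount G (2 * j) = #(matchingEdgeSets G j) := by
  rw [matchCount, ← Set.ncard_coe_finset]
  refine Set.ncard_congr (fun M _ => (Set.toFinite M.edgeSet).toFinset) ?_ ?_ ?_
  · rintro M ⟨hM, hcard⟩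
    simp only [matchingEdgeSets, coe_filter, mem_powersetCard, Set.mem_ofPred_eq,
      Set.Finite.mem_toFinset]
    refine ⟨⟨fun e he => ?_, ?_⟩, fun e he f hf hne v hve hvf => ?_⟩
    · rw [Set.Finite.mem_toFinset] at he
      exact mem_edgeFinset.mpr (M.edgeSet_subset he)
    · rw [← Set.ncard_eq_toFinset_card]
      rw [hM.ncard_verts] at hcard
      omega
    · exact hne (hM.eq_of_mem_edgeSet he hf hve hvf)
  · rintro M N ⟨hM, -⟩ ⟨hN, -⟩ h
    exact IsMatching.injOn_edgeSet hM hN (by simpa using h)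
  · intro F hF
    simp only [matchingEdgeSets, coe_filter, mem_powersetCard, Set.mem_ofPred_eq] at hF
    obtain ⟨⟨hsub, hcard⟩, hdisj⟩ := hF
    have hsub' : (F : Set (Sym2 V)) ⊆ G.edgeSet := fun e he => mem_edgeFinset.mp (hsub he)
    have hM := isMatching_ofEdges hsub' hdisj
    refine ⟨ofEdges F hsub', ⟨hM, ?_⟩, ?_⟩
    · rw [hM.ncard_verts, edgeSet_ofEdges, Set.ncard_coe_finset, hcard]
    · ext e
      simp [edgeSet_ofEdges]

def skewExample : Matrix (Fin 5) (Fin 5) ℤ :=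
  !![0, 1, 1, 1, 1; -1, 0, 1, 0, 1; -1, -1, 0, 1, 0; -1, 0, -1, 0, 0; -1, -1, 0, 0, 0]

theorem skewExample_apply_swap (i j : Fin 5) : skewExample j i = -skewExample i j := by
  revert i j; decide

theorem skewExample_apply_mem (i j : Fin 5) :
    skewExample i j = 0 ∨ skewExample i j = 1 ∨ skewExample i j = -1 := by
  fin_cases i <;> fin_cases j <;> decide

def exampleGraph : SimpleGraph (Fin 5) where
  Adj i j := skewExample i j ≠ 0
  symm := ⟨fun _ _ h => by rwa [skewExample_apply_swap, neg_ne_zero]⟩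
  loopless := ⟨fun i h => h (by revert i; decide)⟩

instance : DecidableRel exampleGraph.Adj := fun _ _ => inferInstanceAs (Decidable (_ ≠ _))

theorem hasEvenCycle_exampleGraph : HasEvenCycle exampleGraph :=
  ⟨3, .cons (by decide : exampleGraph.Adj 3 0) (.cons (by decide : exampleGraph.Adj 0 1)
    (.cons (by decide : exampleGraph.Adj 1 2) (.cons (by decide : exampleGraph.Adj 2 3) .nil))),
    (Walk.cons_isCycle_iff _ _).mpr ⟨Walk.isPath_def _ |>.mpr (by decide), by decide⟩, by decide⟩

theorem isSkewAdj_exampleGraph :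
    IsSkewAdj exampleGraph (skewExample.map (Int.cast : ℤ → ℝ)) := by
  refine ⟨fun i j => ?_, fun i j h => ?_, fun i j h => ?_⟩
  · simp [skewExample_apply_swap i j]
  · rcases skewExample_apply_mem i j with h0 | h1 | h1
    · exact absurd h0 h
    · simp [h1]
    · simp [h1]
  · simp [not_not.mp h]

theorem matchingPoly_exampleGraph : matchingPoly exampleGraph = X ^ 5 - 7 * X ^ 3 + 7 * X := by
  have h0 : matchCount exampleGraph 0 = 1 := matchCount_two_mul exampleGraph 0 ▸ by decide
  have h2 : matchCount exampleGraph 2 = 7 := matchCount_two_mul exampleGraph 1 ▸ by decide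
  have h4 : matchCount exampleGraph 4 = 7 := matchCount_two_mul exampleGraph 2 ▸ by decide
  have h1 : matchCount exampleGraph 1 = 0 := matchCount_of_odd _ odd_one
  have h3 : matchCount exampleGraph 3 = 0 := matchCount_of_odd _ (by decide)
  have h5 : matchCount exampleGraph 5 = 0 := matchCount_of_odd _ (by decide)
  simp [matchingPoly, Finset.sum_range_succ, h0, h1, h2, h3, h4, h5]
  ring

theorem charpoly_skewExample :
    skewExample.charpoly = X ^ 5 + 7 * X ^ 3 + 7 * X := by
  rw [Matrix.charpoly, Matrix.det_succ_row_zero]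
  simp [Fin.sum_univ_succ, Matrix.det_succ_row_zero, Matrix.charmatrix_apply, skewExample,
    Matrix.submatrix_apply, Fin.succAbove]
  ring

/-- There is a graph `G` which is not an odd-cycle graph (it contains an even cycle)
admitting a skew-adjacency matrix `S` with `p_S(x) = (-i)^n · m(G, ix)`. -/
theorem exists_non_oddCycle_graph_with_matching_charpoly :
    ∃ (n : ℕ) (G : SimpleGraph (Fin n)) (S : Matrix (Fin n) (Fin n) ℝ),
      HasEvenCycle G ∧ IsSkewAdj G S ∧
      (S.map Complex.ofReal).charpoly =
        Polynomial.C ((-Complex.I) ^ n) *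
          (matchingPoly G).comp (Polynomial.C Complex.I * Polynomial.X) := by
  refine ⟨5, exampleGraph, skewExample.map (↑), hasEvenCycle_exampleGraph,
    isSkewAdj_exampleGraph, ?_⟩
  have hS : (skewExample.map (Int.cast : ℤ → ℝ)).map Complex.ofReal =
      skewExample.map (Int.castRingHom ℂ) := by
    ext; simp
  rw [hS, Matrix.charpoly_map, charpoly_skewExample, matchingPoly_exampleGraph]
  refine Polynomial.funext fun x => ?_
  simp
  ring_nf
  simp [Complex.I_sq]
end

section
/- Let G be a connected bipartite graph. If the spectral radius ρ(S) is the same for all skew-adjacency matrices S of G (i.e., over all orientations of G), then G is a tree. -/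
/-!
Write `A` for the adjacency matrix of `G` and, for a skew-adjacency matrix `S`, `H = i S`: it is
Hermitian with `|H| = A` entrywise, and the gain of a walk is the product of the entries of `H`
along it.

Rigidity: let `H x = μ x` with `x ≠ 0` and every eigenvalue of `A` at most `|μ|`. Then
`|μ| |x| ≤ A |x|` entrywise, and since `|μ| - A` is positive semidefinite this forces
`A |x| = |μ| |x|`; so `|x| > 0` by connectivity, and the triangle inequality in
`(H x)_u = ∑_v H_uv x_v` is an equality. Hence `|μ| H_uv g_v = μ g_u` on every edge for
`g = x / |x|`, and every closed walk of even length has gain `1` when `μ` is real.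

If `G` is bipartite, orienting all edges from one colour class to the other gives `H = D A D⁻¹`
with `D` diagonal unitary, so its spectral radius is at least every `|λ|`, `λ` an eigenvalue of
`A`, and all closed walks have gain `1`. Reversing one edge of a cycle (even, as `G` is
bipartite) turns its gain into `-1`; since the spectral radius does not change, rigidity applies
to the new orientation and yields a contradiction.
-/


open Polynomial Matrix

variable {V : Type*} [Fintype V] [DecidableEq V]

open SimpleGraph

section LinearAlgebra

variable {α : Type*} [Fintype α] [DecidableEq α]

theorem Matrix.mem_spectrum_iff_exists_mulVec_eq_smul {K : Type*} [Field K] {M : Matrix α α K}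
    {z : K} : z ∈ spectrum K M ↔ ∃ v ≠ 0, M *ᵥ v = z • v := by
  rw [← spectrum_toLin', ← Module.End.hasEigenvalue_iff_mem_spectrum]
  constructor
  · intro hz
    obtain ⟨v, hv⟩ := hz.exists_hasEigenvector
    exact ⟨v, hv.2, Module.End.mem_eigenspace_iff.mp hv.1⟩
  · rintro ⟨v, hv0, hv⟩
    exact Module.End.hasEigenvalue_of_hasEigenvector ⟨Module.End.mem_eigenspace_iff.mpr hv, hv0⟩

open scoped MatrixOrder in
theorem Matrix.IsHermitian.mulVec_eq_smul_of_le_dotProduct {A : Matrix α α ℝ} (hA : A.IsHermitian)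
    {r : ℝ} (hspec : ∀ t ∈ spectrum ℝ A, t ≤ r) {y : α → ℝ} (hy : r * (y ⬝ᵥ y) ≤ y ⬝ᵥ A *ᵥ y) :
    A *ᵥ y = r • y := by
  have hB : (r • 1 - A).PosSemidef := by
    rw [← Algebra.algebraMap_eq_smul_one, ← Matrix.le_iff]
    exact (le_algebraMap_iff_spectrum_le hA.isSelfAdjoint).mpr hspec
  have hBy : (r • 1 - A) *ᵥ y = r • y - A *ᵥ y := by
    rw [sub_mulVec, smul_mulVec, one_mulVec]
  have hq : star y ⬝ᵥ (r • 1 - A) *ᵥ y = 0 := by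
    refine le_antisymm ?_ (hB.dotProduct_mulVec_nonneg y)
    rw [hBy, star_trivial, dotProduct_sub, dotProduct_smul, smul_eq_mul]
    linarith
  rw [hB.dotProduct_mulVec_zero_iff, hBy, sub_eq_zero] at hq
  exact hq.symm

theorem sameRay_sum_of_norm_sum_eq {ι E : Type*} [DecidableEq ι] [NormedAddCommGroup E]
    [NormedSpace ℝ E] [StrictConvexSpace ℝ E] {s : Finset ι} {f : ι → E}
    (h : ‖∑ i ∈ s, f i‖ = ∑ i ∈ s, ‖f i‖) {t : ι} (ht : t ∈ s) :
    SameRay ℝ (∑ i ∈ s, f i) (f t) := by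
  rw [← Finset.add_sum_erase s f ht] at h ⊢
  rw [← Finset.add_sum_erase s _ ht] at h
  have hrest : SameRay ℝ (f t) (∑ i ∈ s.erase t, f i) := by
    refine sameRay_iff_norm_add.mpr (le_antisymm (norm_add_le _ _) ?_)
    rw [h]
    gcongr
    exact norm_sum_le _ _
  exact (SameRay.refl (f t)).add_left hrest.symm

theorem finite_norm_roots_charpoly (M : Matrix α α ℂ) :
    {r : ℝ | ∃ z : ℂ, M.charpoly.IsRoot z ∧ r = ‖z‖}.Finite := by
  have hset : {r : ℝ | ∃ z : ℂ, M.charpoly.IsRoot z ∧ r = ‖z‖} =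
      norm '' {z | M.charpoly.IsRoot z} := by
    ext r
    simp [eq_comm]
  rw [hset]
  exact (Polynomial.finite_setOfPred_isRoot M.charpoly_monic.ne_zero).image _

theorem norm_le_specRad {M : Matrix α α ℂ} {z : ℂ} (hz : z ∈ spectrum ℂ M) : ‖z‖ ≤ specRad M :=
  le_csSup (finite_norm_roots_charpoly M).bddAbove
    ⟨z, mem_spectrum_iff_isRoot_charpoly.mp hz, rfl⟩

theorem exists_mem_spectrum_norm_eq_specRad [Nonempty α] (M : Matrix α α ℂ) :
    ∃ z ∈ spectrum ℂ M, ‖z‖ = specRad M := by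
  have hdeg : 0 < M.charpoly.degree := by
    rw [charpoly_degree_eq_dim]
    exact_mod_cast Fintype.card_pos
  obtain ⟨z, hz⟩ := Complex.exists_root hdeg
  have hne : {r : ℝ | ∃ z : ℂ, M.charpoly.IsRoot z ∧ r = ‖z‖}.Nonempty := ⟨‖z‖, z, hz, rfl⟩
  obtain ⟨w, hw, hwρ⟩ := hne.csSup_mem (finite_norm_roots_charpoly M)
  exact ⟨w, mem_spectrum_iff_isRoot_charpoly.mpr hw, hwρ.symm⟩

end LinearAlgebra

namespace SimpleGraph

variable {α : Type*} {G : SimpleGraph α}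

def Walk.gain {R : Type*} [Monoid R] (H : Matrix α α R) {u v : α} (p : G.Walk u v) : R :=
  (p.darts.map fun d => H d.fst d.snd).prod

@[simp]
theorem Walk.gain_nil {R : Type*} [Monoid R] (H : Matrix α α R) {u : α} :
    (Walk.nil : G.Walk u u).gain H = 1 :=
  rfl

@[simp]
theorem Walk.gain_cons {R : Type*} [Monoid R] (H : Matrix α α R) {u v w : α} (h : G.Adj u v)
    (p : G.Walk v w) : (Walk.cons h p).gain H = H u v * p.gain H := by
  simp [Walk.gain]

theorem Walk.pow_length_mul_gain_mul {R : Type*} [CommMonoid R] {H : Matrix α α R} {g : α → R}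
    {a b : R} (hH : ∀ u v, G.Adj u v → a * H u v * g v = b * g u) {u v : α} (p : G.Walk u v) :
    a ^ p.length * p.gain H * g v = b ^ p.length * g u := by
  induction p with
  | nil => simp
  | @cons u w v h p ih =>
    calc a ^ (p.length + 1) * (H u w * p.gain H) * g v
        = a * H u w * (a ^ p.length * p.gain H * g v) := by
          simp only [pow_succ, mul_assoc, mul_left_comm]
      _ = b ^ (p.length + 1) * g u := by
          rw [ih, mul_left_comm, hH u w h, pow_succ, mul_assoc, mul_left_comm]

theorem Connected.pos_of_adjMatrix_mulVec_eq_smul [Fintype α] [DecidableRel G.Adj]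
    (hG : G.Connected) {y : α → ℝ} (hy0 : 0 ≤ y) (hy : y ≠ 0) {r : ℝ}
    (hAy : G.adjMatrix ℝ *ᵥ y = r • y) (u : α) : 0 < y u := by
  have hadj : ∀ v w, G.Adj v w → y v = 0 → y w = 0 := by
    intro v w hvw hv
    have hsum : ∑ x ∈ G.neighborFinset v, y x = 0 := by
      rw [← adjMatrix_mulVec_apply, hAy, Pi.smul_apply, hv, smul_zero]
    exact (Finset.sum_eq_zero_iff_of_nonneg fun x _ => hy0 x).mp hsum w (by simpa using hvw)
  have hwalk : ∀ {v w : α} (p : G.Walk v w), y v = 0 → y w = 0 := by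
    intro v w p
    induction p with
    | nil => exact id
    | cons h _ ih => exact fun hv => ih (hadj _ _ h hv)
  refine (hy0 u).lt_of_ne fun hu => hy (funext fun w => ?_)
  exact hwalk (hG.preconnected u w).some hu.symm

end SimpleGraph

section Switching

variable {α : Type*} [Fintype α] [DecidableEq α]

theorem Matrix.IsHermitian.mulVec_norm_eq_norm_smul {A : Matrix α α ℝ} (hA : A.IsHermitian)
    {H : Matrix α α ℂ} (hH : ∀ u v, ‖H u v‖ = A u v) {μ : ℂ}
    (hspec : ∀ t ∈ spectrum ℝ A, t ≤ ‖μ‖) {x : α → ℂ} (hx : H *ᵥ x = μ • x) :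
    A *ᵥ (fun u => ‖x u‖) = ‖μ‖ • fun u => ‖x u‖ := by
  set y : α → ℝ := fun u => ‖x u‖
  have hle : ∀ u, ‖μ‖ * y u ≤ (A *ᵥ y) u := fun u =>
    calc ‖μ‖ * y u = ‖∑ v, H u v * x v‖ := by
          rw [← norm_mul, ← smul_eq_mul, ← Pi.smul_apply, ← hx]
          rfl
      _ ≤ ∑ v, ‖H u v * x v‖ := norm_sum_le _ _
      _ = (A *ᵥ y) u := by simp [mulVec, dotProduct, hH, y]
  refine hA.mulVec_eq_smul_of_le_dotProduct hspec ?_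
  calc ‖μ‖ * (y ⬝ᵥ y) = ∑ u, y u * (‖μ‖ * y u) := by
        simp only [dotProduct, Finset.mul_sum]
        ring_nf
    _ ≤ ∑ u, y u * (A *ᵥ y) u :=
        Finset.sum_le_sum fun u _ => mul_le_mul_of_nonneg_left (hle u) (norm_nonneg _)

theorem sameRay_mul_apply_of_mulVec_norm_eq {A : Matrix α α ℝ} {H : Matrix α α ℂ}
    (hH : ∀ u v, ‖H u v‖ = A u v) {μ : ℂ} {x : α → ℂ} (hx : H *ᵥ x = μ • x)
    (hAx : A *ᵥ (fun u => ‖x u‖) = ‖μ‖ • fun u => ‖x u‖) (u v : α) :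
    SameRay ℝ (μ * x u) (H u v * x v) := by
  have hsum : ∑ w, H u w * x w = μ * x u := congrFun hx u
  rw [← hsum]
  refine sameRay_sum_of_norm_sum_eq ?_ (Finset.mem_univ v)
  calc ‖∑ w, H u w * x w‖ = (A *ᵥ fun u => ‖x u‖) u := by rw [hsum, hAx, norm_mul]; rfl
    _ = ∑ w, ‖H u w * x w‖ := by simp [mulVec, dotProduct, hH]

theorem SimpleGraph.Connected.exists_switching {G : SimpleGraph α} [DecidableRel G.Adj]
    (hG : G.Connected) {H : Matrix α α ℂ} (hH : ∀ u v, ‖H u v‖ = G.adjMatrix ℝ u v) {μ : ℂ}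
    (hspec : ∀ t ∈ spectrum ℝ (G.adjMatrix ℝ), t ≤ ‖μ‖) {x : α → ℂ} (hx0 : x ≠ 0)
    (hx : H *ᵥ x = μ • x) :
    ∃ g : α → ℂ, (∀ u, g u ≠ 0) ∧ ∀ u v, G.Adj u v → ‖μ‖ * H u v * g v = μ * g u := by
  have hA : (G.adjMatrix ℝ).IsHermitian := isHermitian_iff_isSymm.mpr G.isSymm_adjMatrix
  have hAx := hA.mulVec_norm_eq_norm_smul hH hspec hx
  have hpos : ∀ u, 0 < ‖x u‖ := hG.pos_of_adjMatrix_mulVec_eq_smul (fun u => norm_nonneg _)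
    (fun h => hx0 (funext fun u => norm_eq_zero.mp (congrFun h u))) hAx
  have hne : ∀ u, (‖x u‖ : ℂ) ≠ 0 := fun u => Complex.ofReal_ne_zero.mpr (hpos u).ne'
  refine ⟨fun u => x u / ‖x u‖, fun u => div_ne_zero (norm_pos_iff.mp (hpos u)) (hne u),
    fun u v huv => ?_⟩
  have hray := (sameRay_mul_apply_of_mulVec_norm_eq hH hx hAx u v).norm_smul_eq
  rw [norm_mul, norm_mul, hH, adjMatrix_apply, if_pos huv, one_mul, Complex.real_smul,
    Complex.real_smul] at hray
  field_simp [hne u, hne v]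
  push_cast at hray
  linear_combination hray

theorem SimpleGraph.Connected.gain_eq_one_of_even_length {G : SimpleGraph α} [DecidableRel G.Adj]
    (hG : G.Connected) {H : Matrix α α ℂ} (hH : ∀ u v, ‖H u v‖ = G.adjMatrix ℝ u v) {μ : ℝ}
    (hμ : μ ≠ 0) (hspec : ∀ t ∈ spectrum ℝ (G.adjMatrix ℝ), t ≤ |μ|) {x : α → ℂ} (hx0 : x ≠ 0)
    (hx : H *ᵥ x = (μ : ℂ) • x) {u : α} (w : G.Walk u u) (hw : Even w.length) : w.gain H = 1 := by
  obtain ⟨g, hg0, hg⟩ := hG.exists_switching hH (by simpa using hspec) hx0 hx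
  have hpow : (μ : ℂ) ^ w.length = ((‖(μ : ℂ)‖ : ℝ) : ℂ) ^ w.length := by
    rw [Complex.norm_real, Real.norm_eq_abs, ← Complex.ofReal_pow, ← Complex.ofReal_pow,
      hw.pow_abs]
  have hne : ((‖(μ : ℂ)‖ : ℝ) : ℂ) ^ w.length ≠ 0 := pow_ne_zero _ (by simpa using hμ)
  have hcycle := w.pow_length_mul_gain_mul hg
  rw [hpow, mul_assoc] at hcycle
  exact mul_right_cancel₀ (hg0 u) ((mul_right_inj' hne).mp hcycle |>.trans (one_mul _).symm)

end Switching

section Orientation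

variable {α : Type*} {G : SimpleGraph α}

def hermitianAdj (S : Matrix α α ℝ) : Matrix α α ℂ :=
  Complex.I • S.map Complex.ofReal

theorem IsSkewAdj.isHermitian_hermitianAdj {S : Matrix α α ℝ} (hS : IsSkewAdj G S) :
    (hermitianAdj S).IsHermitian := by
  ext i j
  simp [hermitianAdj, hS.1 i j]

theorem IsSkewAdj.norm_hermitianAdj_apply [DecidableRel G.Adj] {S : Matrix α α ℝ}
    (hS : IsSkewAdj G S) (u v : α) : ‖hermitianAdj S u v‖ = G.adjMatrix ℝ u v := by
  by_cases huv : G.Adj u v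
  · rcases hS.2.1 u v huv with h | h <;> simp [hermitianAdj, h, huv]
  · simp [hermitianAdj, hS.2.2 u v huv, huv]

theorem I_mul_mem_spectrum_hermitianAdj_iff [Fintype α] [DecidableEq α] {S : Matrix α α ℝ}
    {z : ℂ} : Complex.I * z ∈ spectrum ℂ (hermitianAdj S) ↔ z ∈ spectrum ℂ (S.map Complex.ofReal) :=
  spectrum.smul_mem_smul_iff (r := Units.mk0 Complex.I Complex.I_ne_zero)

theorem IsSkewAdj.exists_hermitianAdj_mulVec_eq_smul [Fintype α] [DecidableEq α] [Nonempty α]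
    {S : Matrix α α ℝ} (hS : IsSkewAdj G S) :
    ∃ μ : ℝ, |μ| = specRad (S.map Complex.ofReal) ∧
      ∃ x ≠ 0, hermitianAdj S *ᵥ x = (μ : ℂ) • x := by
  obtain ⟨z, hz, hzρ⟩ := exists_mem_spectrum_norm_eq_specRad (S.map Complex.ofReal)
  have hIz := I_mul_mem_spectrum_hermitianAdj_iff.mpr hz
  obtain ⟨μ, -, hμ⟩ := hS.isHermitian_hermitianAdj.spectrum_eq_image_range ▸ hIz
  refine ⟨μ, by simpa [hzρ] using congrArg norm hμ, mem_spectrum_iff_exists_mulVec_eq_smul.mp ?_⟩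
  rwa [show (μ : ℂ) = Complex.I * z from hμ]

def reverseEdge [DecidableEq α] (S : Matrix α α ℝ) (e : Sym2 α) : Matrix α α ℝ :=
  Matrix.of fun u v => if s(u, v) = e then -S u v else S u v

theorem IsSkewAdj.reverseEdge [DecidableEq α] {S : Matrix α α ℝ} (hS : IsSkewAdj G S)
    (e : Sym2 α) : IsSkewAdj G (reverseEdge S e) := by
  refine ⟨fun i j => ?_, fun i j hij => ?_, fun i j hij => ?_⟩
  · by_cases he : s(i, j) = e <;> simp [_root_.reverseEdge, Sym2.eq_swap, he, hS.1 i j]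
  · by_cases he : s(i, j) = e <;> rcases hS.2.1 i j hij with h | h <;>
      simp [_root_.reverseEdge, he, h]
  · simp [_root_.reverseEdge, hS.2.2 i j hij]

theorem SimpleGraph.Walk.gain_hermitianAdj_reverseEdge_cons [DecidableEq α] (S : Matrix α α ℝ)
    {a b c : α} (hab : G.Adj a b) (p : G.Walk b c) (hp : s(a, b) ∉ p.edges) :
    (cons hab p).gain (hermitianAdj (reverseEdge S s(a, b))) =
      -(cons hab p).gain (hermitianAdj S) := by
  have hrest : p.gain (hermitianAdj (reverseEdge S s(a, b))) = p.gain (hermitianAdj S) := by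
    refine congrArg List.prod (List.map_congr_left fun d hd => ?_)
    have hde : s(d.fst, d.snd) ≠ s(a, b) := fun h => hp (h ▸ List.mem_map_of_mem hd)
    simp only [hermitianAdj, Matrix.smul_apply, Matrix.map_apply, _root_.reverseEdge,
      Matrix.of_apply, if_neg hde]
  rw [Walk.gain_cons, Walk.gain_cons, hrest]
  simp only [hermitianAdj, Matrix.smul_apply, Matrix.map_apply, _root_.reverseEdge,
    Matrix.of_apply, ite_true]
  push_cast
  ring

end Orientation

namespace SimpleGraph.Coloring

variable {α : Type*} {G : SimpleGraph α} (C : G.Coloring Bool)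

def phase (u : α) : ℂ :=
  if C u then Complex.I else 1

theorem phase_ne_zero (u : α) : C.phase u ≠ 0 := by
  unfold phase
  split_ifs <;> simp

variable [DecidableRel G.Adj]

def skewAdjMatrix : Matrix α α ℝ :=
  Matrix.of fun u v => if G.Adj u v then (if C u then 1 else -1) else 0

theorem isSkewAdj_skewAdjMatrix : IsSkewAdj G C.skewAdjMatrix := by
  refine ⟨fun i j => ?_, fun i j hij => ?_, fun i j hij => ?_⟩
  · by_cases hij : G.Adj i j
    · have hC := C.valid hij
      cases hi : C i <;> cases hj : C j <;> simp_all [skewAdjMatrix, hij.symm]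
    · have hji : ¬G.Adj j i := fun h => hij h.symm
      simp [skewAdjMatrix, hij, hji]
  · cases hi : C i <;> simp [skewAdjMatrix, hij, hi]
  · simp [skewAdjMatrix, hij]

theorem hermitianAdj_skewAdjMatrix_mul_phase {u v : α} (huv : G.Adj u v) :
    hermitianAdj C.skewAdjMatrix u v * C.phase v = C.phase u := by
  have hC := C.valid huv
  cases hu : C u <;> cases hv : C v <;> simp_all [hermitianAdj, skewAdjMatrix, phase]

theorem gain_hermitianAdj_skewAdjMatrix {u : α} (w : G.Walk u u) :
    w.gain (hermitianAdj C.skewAdjMatrix) = 1 := by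
  have hcycle := w.pow_length_mul_gain_mul (a := 1) (b := 1) (g := C.phase)
    fun u v huv => by rw [one_mul, one_mul, C.hermitianAdj_skewAdjMatrix_mul_phase huv]
  simpa [C.phase_ne_zero u] using hcycle

theorem hermitianAdj_skewAdjMatrix_mulVec_phase_mul [Fintype α] (v : α → ℝ) :
    hermitianAdj C.skewAdjMatrix *ᵥ (fun u => C.phase u * v u) =
      fun u => C.phase u * (G.adjMatrix ℝ *ᵥ v) u := by
  ext u
  simp only [mulVec, dotProduct, Complex.ofReal_sum, Finset.mul_sum]
  refine Finset.sum_congr rfl fun w _ => ?_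
  by_cases huw : G.Adj u w
  · rw [← C.hermitianAdj_skewAdjMatrix_mul_phase huw]
    simp [huw]
    ring
  · simp [hermitianAdj, skewAdjMatrix, huw]

theorem abs_le_specRad_skewAdjMatrix [Fintype α] [DecidableEq α] {t : ℝ}
    (ht : t ∈ spectrum ℝ (G.adjMatrix ℝ)) :
    |t| ≤ specRad (C.skewAdjMatrix.map Complex.ofReal) := by
  obtain ⟨v, hv0, hv⟩ := mem_spectrum_iff_exists_mulVec_eq_smul.mp ht
  have hmem : (t : ℂ) ∈ spectrum ℂ (hermitianAdj C.skewAdjMatrix) := by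
    refine mem_spectrum_iff_exists_mulVec_eq_smul.mpr
      ⟨fun u => C.phase u * v u, fun h => hv0 (funext fun u => ?_), ?_⟩
    · simpa [C.phase_ne_zero u] using congrFun h u
    · rw [C.hermitianAdj_skewAdjMatrix_mulVec_phase_mul, hv]
      ext u
      simp only [Pi.smul_apply, smul_eq_mul, Complex.ofReal_mul]
      ring
  have hIt : Complex.I * (-Complex.I * t) = t := by
    rw [← mul_assoc, mul_neg, Complex.I_mul_I, neg_neg, one_mul]
  rw [← hIt] at hmem
  calc |t| = ‖-Complex.I * t‖ := by simp
    _ ≤ _ := norm_le_specRad (I_mul_mem_spectrum_hermitianAdj_iff.mp hmem)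

end SimpleGraph.Coloring

theorem SimpleGraph.exists_ne_zero_mem_spectrum_adjMatrix {α : Type*} [Fintype α] [DecidableEq α]
    {G : SimpleGraph α} [DecidableRel G.Adj] {a b : α} (hab : G.Adj a b) :
    ∃ t ∈ spectrum ℝ (G.adjMatrix ℝ), t ≠ 0 := by
  have hA : (G.adjMatrix ℝ).IsHermitian := isHermitian_iff_isSymm.mpr G.isSymm_adjMatrix
  have hA0 : G.adjMatrix ℝ ≠ 0 := fun h => by simpa [hab] using congrFun (congrFun h a) b
  obtain ⟨v, t, ht0, hv0, hv⟩ := hA.exists_eigenvector_of_ne_zero hA0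
  exact ⟨t, mem_spectrum_iff_exists_mulVec_eq_smul.mpr ⟨v, hv0, hv⟩, ht0⟩

/-- If a connected bipartite graph has the same skew spectral radius for all of its
skew-adjacency matrices, then it is a tree. -/
theorem skew_spectral_radius_constant_bipartite_implies_tree {n : ℕ}
    (G : SimpleGraph (Fin n)) (hconn : G.Connected) (hbip : G.Colorable 2)
    (h : ∀ S S' : Matrix (Fin n) (Fin n) ℝ, IsSkewAdj G S → IsSkewAdj G S' →
      specRad (S.map Complex.ofReal) = specRad (S'.map Complex.ofReal)) :
    G.IsTree := by
  classical
  refine ⟨hconn, fun a w hw => ?_⟩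
  cases w with
  | nil => exact hw.ne_nil rfl
  | @cons _ b _ hab p =>
  let C : G.Coloring Bool := recolorOfEquiv G finTwoEquiv hbip.some
  let S := C.skewAdjMatrix
  have hS' : IsSkewAdj G (reverseEdge S s(a, b)) := C.isSkewAdj_skewAdjMatrix.reverseEdge _
  have hspec (t) (ht : t ∈ spectrum ℝ (G.adjMatrix ℝ)) : |t| ≤ specRad (S.map Complex.ofReal) :=
    C.abs_le_specRad_skewAdjMatrix ht
  have : Nonempty (Fin n) := ⟨a⟩
  obtain ⟨μ, hμρ, x, hx0, hx⟩ := hS'.exists_hermitianAdj_mulVec_eq_smul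
  rw [h _ _ hS' C.isSkewAdj_skewAdjMatrix] at hμρ
  obtain ⟨t, ht, ht0⟩ := exists_ne_zero_mem_spectrum_adjMatrix hab
  have hμ0 : μ ≠ 0 := abs_pos.mp (hμρ ▸ (abs_pos.mpr ht0).trans_le (hspec t ht))
  have hgain := hconn.gain_eq_one_of_even_length hS'.norm_hermitianAdj_apply hμ0
    (fun t ht => (le_abs_self t).trans (hμρ ▸ hspec t ht)) hx0 hx (.cons hab p)
    (two_colorable_iff_forall_loop_even.mp hbip a _)
  rw [Walk.gain_hermitianAdj_reverseEdge_cons S hab p ((Walk.cons_isCycle_iff p hab).mp hw).2,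
    C.gain_hermitianAdj_skewAdjMatrix] at hgain
  norm_num at hgain
end

section
/- Let G be a connected bipartite graph with adjacency matrix A = [[O, B],[Bᵀ, O]] (blocks according to the bipartition). Then the skew-adjacency matrix S̄ = [[O, B],[−Bᵀ, O]] satisfies ρ(S̄) = ρ(A); that is, the maximum skew spectral radius of G equals the adjacency spectral radius of G, attained by orienting all edges from one side of the bipartition to the other. -/
open Polynomial Matrix

variable {V : Type*} [Fintype V] [DecidableEq V]

/-- The bipartite graph on `Fin a ⊕ Fin b` whose edges are the support of `B`. -/
def bipartiteGraph {a b : ℕ} (B : Matrix (Fin a) (Fin b) ℝ) : SimpleGraph (Fin a ⊕ Fin b) where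
  Adj x y := match x, y with
    | Sum.inl i, Sum.inr j => B i j ≠ 0
    | Sum.inr j, Sum.inl i => B i j ≠ 0
    | _, _ => False
  symm := ⟨by rintro (i | i) (j | j) h <;> simp_all⟩
  loopless := ⟨by rintro (i | i) h <;> simp_all⟩

/-! Conjugating by `D = diag(1, i)` (identity on the first side of the bipartition, `i` on the
second) turns `[[0, B], [-Bᵀ, 0]]` into `-i • [[0, B], [Bᵀ, 0]]`, so the two spectra differ by the
factor `-i` and the spectral radii agree. For any skew-adjacency matrix `S` of a graph with
adjacency matrix `A` one has `|S x| ≤ A |x|` entrywise, hence `ρ(S) ≤ ‖S‖ ≤ ‖A‖ = ρ(A)` for the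
`ℓ²` operator norm, the last equality because `A` is symmetric. -/

open scoped Matrix.Norms.L2Operator

theorem specRad_eq_sSup_norm_spectrum (M : Matrix V V ℂ) :
    specRad M = sSup ((‖·‖) '' spectrum ℂ M) := by
  simp only [specRad, mem_spectrum_iff_isRoot_charpoly, Set.image, eq_comm]

theorem specRad_nonneg (M : Matrix V V ℂ) : 0 ≤ specRad M := by
  rw [specRad_eq_sSup_norm_spectrum]
  exact Real.sSup_nonneg (by rintro _ ⟨z, -, rfl⟩; exact norm_nonneg z)

theorem norm_le_specRad_of_mem_spectrum {M : Matrix V V ℂ} {z : ℂ} (hz : z ∈ spectrum ℂ M) :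
    ‖z‖ ≤ specRad M := by
  rw [specRad_eq_sSup_norm_spectrum]
  exact le_csSup ((M.finite_spectrum.image _).bddAbove) ⟨z, hz, rfl⟩

theorem specRad_le_l2_opNorm (M : Matrix V V ℂ) : specRad M ≤ ‖M‖ := by
  rw [specRad_eq_sSup_norm_spectrum]
  refine Real.sSup_le ?_ (norm_nonneg M)
  rintro _ ⟨z, hz, rfl⟩
  cases subsingleton_or_nontrivial (Matrix V V ℂ)
  · simp [spectrum.of_subsingleton] at hz
  · exact spectrum.norm_le_norm_of_mem hz

theorem IsSelfAdjoint.l2_opNorm_le_specRad {M : Matrix V V ℂ} (hM : IsSelfAdjoint M) :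
    ‖M‖ ≤ specRad M := by
  have h_le : spectralRadius ℂ M ≤ ENNReal.ofReal (specRad M) :=
    iSup₂_le fun z hz => (ENNReal.le_ofReal_iff_toReal_le ENNReal.coe_ne_top (specRad_nonneg M)).2
      (norm_le_specRad_of_mem_spectrum hz)
  rw [hM.spectralRadius_eq_nnnorm] at h_le
  exact (ENNReal.le_ofReal_iff_toReal_le ENNReal.coe_ne_top (specRad_nonneg M)).1 h_le

theorem specRad_mul_mul_of_mul_eq_one {P Q : Matrix V V ℂ} (hQP : Q * P = 1) (M : Matrix V V ℂ) :
    specRad (P * M * Q) = specRad M := by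
  rw [specRad, charpoly_mul_comm, ← mul_assoc, hQP, one_mul, ← specRad]

theorem specRad_smul {c : ℂ} (hc : c ≠ 0) (M : Matrix V V ℂ) :
    specRad (c • M) = ‖c‖ * specRad M := by
  have h := spectrum.unit_smul_eq_smul (R := ℂ) M (Units.mk0 c hc)
  simp only [Units.smul_mk0] at h
  rw [specRad_eq_sSup_norm_spectrum, specRad_eq_sSup_norm_spectrum, h, ← smul_eq_mul,
    ← Real.sSup_smul_of_nonneg (norm_nonneg c), ← Set.image_smul, ← Set.image_smul,
    Set.image_image, Set.image_image]
  simp only [smul_eq_mul, norm_mul]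

open Complex in
theorem Matrix.fromBlocks_zero_neg_eq_conj {m n : Type*} [Fintype m] [Fintype n]
    [DecidableEq m] [DecidableEq n] (B : Matrix m n ℂ) (C : Matrix n m ℂ) :
    fromBlocks 0 B (-C) 0 =
      fromBlocks 1 0 0 (-I • 1) * (-I • fromBlocks 0 B C 0) * fromBlocks 1 0 0 (I • 1) := by
  simp [fromBlocks_multiply, fromBlocks_smul, fromBlocks_neg, smul_smul]

theorem specRad_fromBlocks_zero_neg {m n : Type*} [Fintype m] [Fintype n] [DecidableEq m]
    [DecidableEq n] (B : Matrix m n ℂ) (C : Matrix n m ℂ) :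
    specRad (fromBlocks 0 B (-C) 0) = specRad (fromBlocks 0 B C 0) := by
  have h_inv : fromBlocks 1 0 0 (Complex.I • 1) * fromBlocks 1 0 0 (-Complex.I • 1) =
      (1 : Matrix (m ⊕ n) (m ⊕ n) ℂ) := by
    simp [fromBlocks_multiply, smul_smul]
  rw [fromBlocks_zero_neg_eq_conj, specRad_mul_mul_of_mul_eq_one h_inv,
    specRad_smul (neg_ne_zero.2 Complex.I_ne_zero), norm_neg, Complex.norm_I, one_mul]

theorem EuclideanSpace.norm_le_norm_of_forall_norm_apply_le {𝕜 ι : Type*} [RCLike 𝕜] [Fintype ι]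
    {x y : EuclideanSpace 𝕜 ι} (h : ∀ i, ‖x i‖ ≤ ‖y i‖) : ‖x‖ ≤ ‖y‖ := by
  rw [EuclideanSpace.norm_eq, EuclideanSpace.norm_eq]
  gcongr with i
  exact h i

theorem Matrix.l2_opNorm_le_of_norm_apply_le {m n : Type*} [Fintype m] [Fintype n] [DecidableEq n]
    {S : Matrix m n ℂ} {R : Matrix m n ℝ} (h : ∀ i j, ‖S i j‖ ≤ R i j) :
    ‖S‖ ≤ ‖R.map Complex.ofReal‖ := by
  rw [l2_opNorm_def]
  refine ContinuousLinearMap.opNorm_le_bound _ (norm_nonneg _) fun x => ?_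
  let absx : EuclideanSpace ℂ n := WithLp.toLp 2 fun j => (‖x j‖ : ℂ)
  have h_absx : ‖absx‖ = ‖x‖ := by simp [absx, EuclideanSpace.norm_eq]
  have h_pointwise : ∀ i, ‖(S *ᵥ x) i‖ ≤ ‖(R.map Complex.ofReal *ᵥ absx) i‖ := by
    intro i
    have h_nonneg : 0 ≤ ∑ j, R i j * ‖x j‖ :=
      Finset.sum_nonneg fun j _ => mul_nonneg ((norm_nonneg _).trans (h i j)) (norm_nonneg _)
    have h_real : (R.map Complex.ofReal *ᵥ absx) i = ((∑ j, R i j * ‖x j‖ : ℝ) : ℂ) := by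
      simp [mulVec, dotProduct, absx]
    rw [h_real, Complex.norm_real, Real.norm_of_nonneg h_nonneg]
    calc ‖(S *ᵥ x) i‖ ≤ ∑ j, ‖S i j * x j‖ := norm_sum_le _ _
      _ ≤ ∑ j, R i j * ‖x j‖ := by
        gcongr with j
        rw [norm_mul]
        exact mul_le_mul_of_nonneg_right (h i j) (norm_nonneg _)
  calc _ ≤ ‖(EuclideanSpace.equiv m ℂ).symm (R.map Complex.ofReal *ᵥ absx)‖ :=
        EuclideanSpace.norm_le_norm_of_forall_norm_apply_le h_pointwise
    _ ≤ ‖R.map Complex.ofReal‖ * ‖x‖ := h_absx ▸ l2_opNorm_mulVec _ absx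

theorem Matrix.IsSymm.isSelfAdjoint_map_ofReal {n : Type*} {A : Matrix n n ℝ} (hA : A.IsSymm) :
    IsSelfAdjoint (A.map Complex.ofReal) := by
  rw [isSelfAdjoint_iff, star_eq_conjTranspose,
    ← conjTranspose_map _ (fun _ => by simp), conjTranspose_eq_transpose_of_trivial, hA]

theorem IsSkewAdj.abs_apply_le_adjMatrix {W : Type*} {G : SimpleGraph W} [DecidableRel G.Adj]
    {S : Matrix W W ℝ} (hS : IsSkewAdj G S) (i j : W) : |S i j| ≤ G.adjMatrix ℝ i j := by
  by_cases hij : G.Adj i j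
  · rcases hS.2.1 i j hij with h | h <;> simp [h, hij]
  · simp [hS.2.2 i j hij, hij]

theorem IsSkewAdj.specRad_le {G : SimpleGraph V} [DecidableRel G.Adj] {S : Matrix V V ℝ}
    (hS : IsSkewAdj G S) :
    specRad (S.map Complex.ofReal) ≤ specRad ((G.adjMatrix ℝ).map Complex.ofReal) :=
  calc specRad (S.map Complex.ofReal) ≤ ‖S.map Complex.ofReal‖ := specRad_le_l2_opNorm _
    _ ≤ ‖(G.adjMatrix ℝ).map Complex.ofReal‖ :=
      l2_opNorm_le_of_norm_apply_le fun i j => by simpa using hS.abs_apply_le_adjMatrix i j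
    _ ≤ specRad ((G.adjMatrix ℝ).map Complex.ofReal) :=
      G.isSymm_adjMatrix.isSelfAdjoint_map_ofReal.l2_opNorm_le_specRad

section Bipartite

variable {a b : ℕ} {B : Matrix (Fin a) (Fin b) ℝ}

theorem adjMatrix_bipartiteGraph [DecidableRel (bipartiteGraph B).Adj]
    (hB : ∀ i j, B i j = 0 ∨ B i j = 1) :
    (bipartiteGraph B).adjMatrix ℝ = fromBlocks 0 B Bᵀ 0 := by
  ext (i | i) (j | j) <;> rw [SimpleGraph.adjMatrix_apply]
  · simp [bipartiteGraph]
  · rcases hB i j with h | h <;> simp [bipartiteGraph, h]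
  · rcases hB j i with h | h <;> simp [bipartiteGraph, h]
  · simp [bipartiteGraph]

theorem isSkewAdj_fromBlocks_neg_transpose (hB : ∀ i j, B i j = 0 ∨ B i j = 1) :
    IsSkewAdj (bipartiteGraph B) (fromBlocks 0 B (-Bᵀ) 0) := by
  refine ⟨?_, ?_, ?_⟩
  · rintro (i | i) (j | j) <;> simp
  · rintro (i | i) (j | j) h
    · simp [bipartiteGraph] at h
    · rcases hB i j with h' | h' <;> simp_all [bipartiteGraph]
    · rcases hB j i with h' | h' <;> simp_all [bipartiteGraph]
    · simp [bipartiteGraph] at h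
  · rintro (i | i) (j | j) h <;> simp_all [bipartiteGraph]

end Bipartite

theorem specRad_skew_block_eq_adjacency_general {a b : ℕ} (B : Matrix (Fin a) (Fin b) ℝ)
    (hB : ∀ i j, B i j = 0 ∨ B i j = 1) :
    specRad ((Matrix.fromBlocks 0 B (-Bᵀ) 0).map Complex.ofReal) =
      specRad ((Matrix.fromBlocks 0 B Bᵀ 0).map Complex.ofReal) ∧
    IsSkewAdj (bipartiteGraph B) (Matrix.fromBlocks 0 B (-Bᵀ) 0) ∧
    maxSkewSpecRad (bipartiteGraph B) =
      specRad ((Matrix.fromBlocks 0 B Bᵀ 0).map Complex.ofReal) := by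
  classical
  have h_skew := isSkewAdj_fromBlocks_neg_transpose hB
  have h_spec : specRad ((fromBlocks 0 B (-Bᵀ) 0).map Complex.ofReal) =
      specRad ((fromBlocks 0 B Bᵀ 0).map Complex.ofReal) := by
    simpa [fromBlocks_map, transpose_map, Matrix.map_neg] using
      specRad_fromBlocks_zero_neg (B.map Complex.ofReal) (Bᵀ.map Complex.ofReal)
  refine ⟨h_spec, h_skew, IsGreatest.csSup_eq ⟨⟨_, h_skew, h_spec.symm⟩, ?_⟩⟩
  rintro _ ⟨S, hS, rfl⟩
  rw [← adjMatrix_bipartiteGraph hB]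
  exact hS.specRad_le

/-- For a connected bipartite graph with adjacency matrix `A = [[0,B],[Bᵀ,0]]`, the
skew-adjacency matrix `S̄ = [[0,B],[-Bᵀ,0]]` satisfies `ρ(S̄) = ρ(A)`, and this is
the maximum skew spectral radius of the graph. -/
theorem specRad_skew_block_eq_adjacency {a b : ℕ} (B : Matrix (Fin a) (Fin b) ℝ)
    (hB : ∀ i j, B i j = 0 ∨ B i j = 1)
    (hconn : (bipartiteGraph B).Connected) :
    specRad ((Matrix.fromBlocks 0 B (-Bᵀ) 0).map Complex.ofReal) =
      specRad ((Matrix.fromBlocks 0 B Bᵀ 0).map Complex.ofReal) ∧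
    IsSkewAdj (bipartiteGraph B) (Matrix.fromBlocks 0 B (-Bᵀ) 0) ∧
    maxSkewSpecRad (bipartiteGraph B) =
      specRad ((Matrix.fromBlocks 0 B Bᵀ 0).map Complex.ofReal) :=
  specRad_skew_block_eq_adjacency_general B hB
end
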